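/- Let K ∈ M_+(ℝ_+×ℝ_+) be homogeneous of degree −1, i.e., K(λx, λy) = λ^{-1} K(x,y) for all λ, x, y ∈ ℝ_+, and fix 1 < p < ∞. Then there is C > 0 with [ ∫_{ℝ_+} (T_K f)(x)^p dx ]^{1/p} ≤ C [ ∫_{ℝ_+} f(y)^p dy ]^{1/p} for all f ∈ M_+(ℝ_+), if and only if ∫_{ℝ_+} K(1,y) y^{-1/p} dy < ∞. -/

import Mathlib

/-!
By homogeneity, `T_K f (x) = ∫ K(1,t) f(x t) dt`: `T_K` averages the dilations `f ↦ f(t ·)`,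
which have norm `t^{-1/p}` on `L^p(ℝ₊)`. Jensen's inequality for the weight `K(1,t) t^{-1/p}`
followed by Tonelli bounds `‖T_K f‖_p` by `(∫ K(1,t) t^{-1/p} dt) ‖f‖_p`.

Conversely, test the bound on `f = y^{-1/p} 1_{(1, r²)}`, for which `‖f‖_p^p = 2 log r`.
If `0 < a < b` and `r = b/a`, then every `x ∈ (1/a, r/a)` satisfies
`T_K f (x) ≥ x^{-1/p} ∫_a^b K(1,t) t^{-1/p} dt`, and `x^{-1}` integrates to `log r` over that
range. Hence `(∫_a^b K(1,t) t^{-1/p} dt)^p ≤ 2 C^p` uniformly in `a, b`.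
-/

open MeasureTheory Set
open scoped ENNReal

noncomputable section

/-- The positive integral operator `T_K` on `ℝ₊`. -/
def TK (K : ℝ → ℝ → ℝ≥0∞) (f : ℝ → ℝ≥0∞) (x : ℝ) : ℝ≥0∞ :=
  ∫⁻ y in Ioi (0:ℝ), K x y * f y

/-- Distribution function `μ_f(λ) = |{x ∈ ℝ₊ : f x > λ}|`. -/
def distrib (f : ℝ → ℝ≥0∞) (l : ℝ≥0∞) : ℝ≥0∞ :=
  volume {x : ℝ | 0 < x ∧ l < f x}

/-- Nonincreasing rearrangement `f*(t) = inf{λ : μ_f(λ) ≤ t}`. -/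
def rearr (f : ℝ → ℝ≥0∞) (t : ℝ) : ℝ≥0∞ :=
  sInf {l : ℝ≥0∞ | distrib f l ≤ ENNReal.ofReal t}

/-- Extension of a real function to `ℝ≥0∞`. -/
def extE (F : ℝ → ℝ) (a : ℝ≥0∞) : ℝ≥0∞ :=
  if a = ⊤ then ⊤ else ENNReal.ofReal (F a.toReal)

/-- Orlicz–Lorentz gauge functional `ρ_{Φ,u}`. -/
def ogauge (F : ℝ → ℝ) (u : ℝ → ℝ) (f : ℝ → ℝ≥0∞) : ℝ≥0∞ :=
  sInf {l : ℝ≥0∞ | 0 < l ∧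
    (∫⁻ x in Ioi (0:ℝ), extE F (f x / l) * ENNReal.ofReal (u x)) ≤ 1}

/-- `F` is an N-function with density `φ`: `F x = ∫_0^x φ`, `φ` increasing from `ℝ₊` onto `ℝ₊`. -/
def IsNFunction (F φ : ℝ → ℝ) : Prop :=
  StrictMonoOn φ (Ioi 0) ∧ MapsTo φ (Ioi 0) (Ioi 0) ∧ SurjOn φ (Ioi 0) (Ioi 0) ∧
    ∀ x : ℝ, 0 ≤ x → F x = ∫ y in (0:ℝ)..x, φ y

/-- `F(2t) ≈ F(t)` on `ℝ₊`. -/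
def Doubling (F : ℝ → ℝ) : Prop := ∃ C > 0, ∀ t > 0, F (2 * t) ≤ C * F t

/-- A weight: nonnegative, measurable, locally integrable on `ℝ₊`. -/
def IsWeight (u : ℝ → ℝ) : Prop :=
  Measurable u ∧ (∀ x, 0 ≤ u x) ∧ LocallyIntegrableOn u (Ioi 0)

/-- `U(x) = ∫_0^x u`. -/
def Uw (u : ℝ → ℝ) (x : ℝ) : ℝ := ∫ t in (0:ℝ)..x, u t

/-- `Ψ` (with density `ψ`) is the complementary N-function of the N-function `Φ`
(with density `φ`), i.e. `ψ = φ⁻¹` and `Ψ t = ∫_0^t φ⁻¹`. -/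
def IsComplementary (F φ G ψ : ℝ → ℝ) : Prop :=
  IsNFunction F φ ∧ IsNFunction G ψ ∧ InvOn ψ φ (Ioi 0) (Ioi 0)

/-- `g` is the inverse of `f` on `[0,∞)`. -/
def IsInverseOn (g f : ℝ → ℝ) : Prop :=
  (∀ x ≥ 0, g (f x) = x) ∧ (∀ y ≥ 0, f (g y) = y)

/-- Iterated rearrangement `L(t,s) = (K^{*₂})^{*₁}(t,s)`. -/
def iterRearr (K : ℝ → ℝ → ℝ≥0∞) (t s : ℝ) : ℝ≥0∞ :=
  rearr (fun x => rearr (fun y => K x y) s) t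

/-- `α(λ,x) = ∫_x^∞ Φ(λ/U(y)) u(y) dy`. -/
def hardyAlpha (F : ℝ → ℝ) (u : ℝ → ℝ) (lam x : ℝ) : ℝ≥0∞ :=
  ∫⁻ y in Ioi x, extE F (ENNReal.ofReal lam / ENNReal.ofReal (Uw u y)) * ENNReal.ofReal (u y)

/-- `β(λ,x) = ∫_x^∞ Φ(λ/y) u(y) dy`. -/
def hardyBeta (F : ℝ → ℝ) (u : ℝ → ℝ) (lam x : ℝ) : ℝ≥0∞ :=
  ∫⁻ y in Ioi x, ENNReal.ofReal (F (lam / y)) * ENNReal.ofReal (u y)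

/-- The Hardy-averaging conditions (14)–(15) for an N-function `Φ` (density `φ`,
inverse density `ψ = φ⁻¹`) and weight `u`. -/
def HardyConditions (F φ ψ u : ℝ → ℝ) : Prop :=
  ∃ c > 0, (∀ lam > 0, ∀ x > 0,
      extE φ (ENNReal.ofReal c * hardyAlpha F u lam x / ENNReal.ofReal lam) *
        ENNReal.ofReal (Uw u x) ≤ ENNReal.ofReal (lam / c)) ∧
    (∀ lam > 0, ∀ x > 0,
      (∫⁻ y in Ioo (0:ℝ) x,
        extE ψ ((ENNReal.ofReal c * hardyBeta F u lam x / ENNReal.ofReal lam) *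
          ENNReal.ofReal (y / Uw u y)) * ENNReal.ofReal (y * u y / Uw u y))
        ≤ ENNReal.ofReal (lam / c))

theorem ENNReal.lintegral_mul_rpow_le {α : Type*} [MeasurableSpace α] {μ : Measure α} {p : ℝ}
    (hp : 1 ≤ p) {w h : α → ℝ≥0∞} (hw : AEMeasurable w μ) (hh : AEMeasurable h μ) :
    (∫⁻ a, w a * h a ∂μ) ^ p ≤ (∫⁻ a, w a ∂μ) ^ (p - 1) * ∫⁻ a, w a * h a ^ p ∂μ := by
  rcases hp.eq_or_lt with rfl | hp
  · simp
  have hpq : p.HolderConjugate p.conjExponent := .conjExponent hp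
  have hp0 : 0 < p := hpq.pos
  have hq0 : 0 < p.conjExponent := hpq.symm.pos
  have hsplit : ∀ a, w a * h a = w a ^ (1 / p.conjExponent) * (w a ^ (1 / p) * h a) := by
    intro a
    rw [← mul_assoc, ← ENNReal.rpow_add_of_nonneg _ _ (by positivity) (by positivity),
      one_div, one_div, hpq.symm.inv_add_inv_eq_one, ENNReal.rpow_one]
  have hH := ENNReal.lintegral_mul_le_Lp_mul_Lq μ hpq.symm
    (hw.pow_const (1 / p.conjExponent)) ((hw.pow_const (1 / p)).mul hh)
  simp only [Pi.mul_apply, ← hsplit, ← ENNReal.rpow_mul, one_div_mul_cancel hq0.ne',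
    ENNReal.rpow_one, ENNReal.mul_rpow_of_nonneg _ _ hp0.le, one_div_mul_cancel hp0.ne'] at hH
  calc (∫⁻ a, w a * h a ∂μ) ^ p
      ≤ ((∫⁻ a, w a ∂μ) ^ (1 / p.conjExponent) * (∫⁻ a, w a * h a ^ p ∂μ) ^ (1 / p)) ^ p :=
        ENNReal.rpow_le_rpow hH hp0.le
    _ = (∫⁻ a, w a ∂μ) ^ (p - 1) * ∫⁻ a, w a * h a ^ p ∂μ := by
        rw [ENNReal.mul_rpow_of_nonneg _ _ hp0.le, ← ENNReal.rpow_mul, ← ENNReal.rpow_mul,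
          one_div_mul_cancel hp0.ne', ENNReal.rpow_one, Real.conjExponent]
        congr 2; field_simp

theorem ENNReal.rpow_one_div_le_mul_rpow_one_div_iff {p : ℝ} (hp : 0 < p) {a b c : ℝ≥0∞} :
    a ^ (1 / p) ≤ c * b ^ (1 / p) ↔ a ≤ c ^ p * b := by
  rw [← ENNReal.rpow_le_rpow_iff hp, ENNReal.mul_rpow_of_nonneg _ _ hp.le, ← ENNReal.rpow_mul,
    ← ENNReal.rpow_mul, one_div_mul_cancel hp.ne', ENNReal.rpow_one, ENNReal.rpow_one]

lemma setLIntegral_Ioi_comp_mul_left (g : ℝ → ℝ≥0∞) {a : ℝ} (ha : 0 < a) :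
    ∫⁻ t in Ioi (0:ℝ), g (a * t) = (ENNReal.ofReal a)⁻¹ * ∫⁻ y in Ioi (0:ℝ), g y := by
  let e := MeasurableEquiv.mulLeft₀ a ha.ne'
  have hpre : e ⁻¹' Ioi 0 = Ioi 0 := by
    ext t; simp [e, ha]
  calc ∫⁻ t in Ioi (0:ℝ), g (a * t)
      = ∫⁻ y, g y ∂((volume.restrict (e ⁻¹' Ioi 0)).map e) := by
        rw [lintegral_map_equiv, hpre]; rfl
    _ = (ENNReal.ofReal a)⁻¹ * ∫⁻ y in Ioi (0:ℝ), g y := by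
        rw [← e.restrict_map, MeasurableEquiv.coe_mulLeft₀, Real.map_volume_mul_left ha.ne',
          Measure.restrict_smul, lintegral_smul_measure, abs_of_pos (inv_pos.2 ha),
          ENNReal.ofReal_inv_of_pos ha, smul_eq_mul]

lemma setLIntegral_Ioo_inv {u v : ℝ} (hu : 0 < u) (huv : u ≤ v) :
    ∫⁻ x in Ioo u v, ENNReal.ofReal x⁻¹ = ENNReal.ofReal (Real.log (v / u)) := by
  have hv : 0 < v := hu.trans_le huv
  have hpos : ∀ x ∈ uIcc u v, x ≠ 0 := fun x hx => ((lt_min hu hv).trans_le hx.1).ne'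
  rw [← ofReal_integral_eq_lintegral_ofReal, ← integral_Ioc_eq_integral_Ioo,
    ← intervalIntegral.integral_of_le huv, integral_inv_of_pos hu hv]
  · exact (intervalIntegral.intervalIntegrable_inv hpos continuousOn_id).1.mono_set
      Ioo_subset_Ioc_self
  · exact (ae_restrict_iff' measurableSet_Ioo).2
      (.of_forall fun x hx => inv_nonneg.2 (hu.trans hx.1).le)

def IsHomogeneousNegOne (K : ℝ → ℝ → ℝ≥0∞) : Prop :=
  ∀ l > 0, ∀ x > 0, ∀ y > 0, K (l * x) (l * y) = K x y / ENNReal.ofReal l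

lemma TK_eq_lintegral_comp_mul {K : ℝ → ℝ → ℝ≥0∞} (hhom : IsHomogeneousNegOne K)
    (f : ℝ → ℝ≥0∞) {x : ℝ} (hx : 0 < x) :
    TK K f x = ∫⁻ t in Ioi (0:ℝ), K 1 t * f (x * t) := by
  have hx' : ENNReal.ofReal x ≠ 0 := by simpa using hx
  have hscale : ∀ t ∈ Ioi (0:ℝ),
      K 1 t * f (x * t) = ENNReal.ofReal x * (K x (x * t) * f (x * t)) := by
    intro t ht
    have := hhom x hx 1 one_pos t ht
    rw [mul_one] at this
    rw [this, ← mul_assoc, ENNReal.mul_div_cancel hx' ENNReal.ofReal_ne_top]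
  rw [setLIntegral_congr_fun measurableSet_Ioi hscale,
    lintegral_const_mul' _ _ ENNReal.ofReal_ne_top,
    setLIntegral_Ioi_comp_mul_left (fun y => K x y * f y) hx, ← mul_assoc,
    ENNReal.mul_inv_cancel hx' ENNReal.ofReal_ne_top, one_mul, TK]

lemma TK_rpow_le {K : ℝ → ℝ → ℝ≥0∞} (hK : Measurable (K 1))
    (hhom : IsHomogeneousNegOne K) {p : ℝ} (hp : 1 ≤ p) {f : ℝ → ℝ≥0∞} (hf : Measurable f) {x : ℝ} (hx : 0 < x) :
    TK K f x ^ p ≤ (∫⁻ t in Ioi (0:ℝ), K 1 t * ENNReal.ofReal (t ^ (-(1 / p)))) ^ (p - 1) *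
      ∫⁻ t in Ioi (0:ℝ),
        K 1 t * ENNReal.ofReal (t ^ (-(1 / p))) * (ENNReal.ofReal t * f (t * x) ^ p) := by
  have hp0 : 0 < p := one_pos.trans_le hp
  have hsplit : ∀ t ∈ Ioi (0:ℝ), K 1 t * f (x * t) =
      K 1 t * ENNReal.ofReal (t ^ (-(1 / p))) * (ENNReal.ofReal (t ^ (1 / p)) * f (x * t)) := by
    intro t (ht : 0 < t)
    rw [← mul_assoc, mul_assoc (K 1 t), ← ENNReal.ofReal_mul (by positivity),
      ← Real.rpow_add ht, neg_add_cancel, Real.rpow_zero, ENNReal.ofReal_one, mul_one]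
  have hpow : ∀ t ∈ Ioi (0:ℝ), (ENNReal.ofReal (t ^ (1 / p)) * f (x * t)) ^ p =
      ENNReal.ofReal t * f (t * x) ^ p := by
    intro t (ht : 0 < t)
    rw [ENNReal.mul_rpow_of_nonneg _ _ hp0.le, ENNReal.ofReal_rpow_of_nonneg (by positivity)
      hp0.le, ← Real.rpow_mul ht.le, one_div_mul_cancel hp0.ne', Real.rpow_one, mul_comm x t]
  rw [TK_eq_lintegral_comp_mul hhom f hx, setLIntegral_congr_fun measurableSet_Ioi hsplit]
  refine (ENNReal.lintegral_mul_rpow_le hp (by fun_prop) (by fun_prop)).trans_eq ?_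
  congr 1
  exact setLIntegral_congr_fun measurableSet_Ioi fun t ht => by rw [hpow t ht]

lemma lintegral_TK_rpow_le {K : ℝ → ℝ → ℝ≥0∞} (hK : Measurable (Function.uncurry K))
    (hhom : IsHomogeneousNegOne K) {p : ℝ} (hp : 1 ≤ p) {f : ℝ → ℝ≥0∞}
    (hf : Measurable f) :
    ∫⁻ x in Ioi (0:ℝ), TK K f x ^ p ≤
      (∫⁻ t in Ioi (0:ℝ), K 1 t * ENNReal.ofReal (t ^ (-(1 / p)))) ^ p *
        ∫⁻ y in Ioi (0:ℝ), f y ^ p := by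
  set w : ℝ → ℝ≥0∞ := fun t => K 1 t * ENNReal.ofReal (t ^ (-(1 / p)))
  set A := ∫⁻ t in Ioi (0:ℝ), w t
  set N := ∫⁻ y in Ioi (0:ℝ), f y ^ p
  set G : ℝ → ℝ → ℝ≥0∞ := fun x t => w t * (ENNReal.ofReal t * f (t * x) ^ p)
  have hw : Measurable w := hK.of_uncurry_left.mul (by fun_prop)
  have hG : Measurable (Function.uncurry G) :=
    (hw.comp measurable_snd).mul <| (ENNReal.measurable_ofReal.comp measurable_snd).mul <|
      (hf.comp (measurable_snd.mul measurable_fst)).pow_const p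
  have hdil : ∀ t ∈ Ioi (0:ℝ),
      ∫⁻ x in Ioi (0:ℝ), ENNReal.ofReal t * f (t * x) ^ p = N := by
    intro t (ht : 0 < t)
    rw [lintegral_const_mul' _ _ ENNReal.ofReal_ne_top,
      setLIntegral_Ioi_comp_mul_left (fun y => f y ^ p) ht, ← mul_assoc,
      ENNReal.mul_inv_cancel (by simpa using ht) ENNReal.ofReal_ne_top, one_mul]
  calc ∫⁻ x in Ioi (0:ℝ), TK K f x ^ p
      ≤ ∫⁻ x in Ioi (0:ℝ), A ^ (p - 1) * ∫⁻ t in Ioi (0:ℝ), G x t :=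
        setLIntegral_mono (hG.lintegral_prod_right.const_mul _) fun x hx =>
          TK_rpow_le hK.of_uncurry_left hhom hp hf hx
    _ = A ^ (p - 1) * ∫⁻ t in Ioi (0:ℝ), w t * ∫⁻ x in Ioi (0:ℝ),
          ENNReal.ofReal t * f (t * x) ^ p := by
        rw [lintegral_const_mul _ hG.lintegral_prod_right,
          lintegral_lintegral_swap hG.aemeasurable]
        congr 1
        exact lintegral_congr fun t => lintegral_const_mul _ (by fun_prop)
    _ = A ^ (p - 1) * (A * N) := by
        rw [setLIntegral_congr_fun measurableSet_Ioi fun t ht => by rw [hdil t ht],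
          lintegral_mul_const _ hw]
    _ = A ^ p * N := by
        nth_rw 2 [← ENNReal.rpow_one A]
        rw [← mul_assoc, ← ENNReal.rpow_add_of_nonneg _ _ (by linarith) zero_le_one,
          sub_add_cancel]

def negPowIndicator (p N : ℝ) : ℝ → ℝ≥0∞ :=
  (Ioo 1 N).indicator fun y => ENNReal.ofReal (y ^ (-(1 / p)))

lemma measurable_negPowIndicator (p N : ℝ) : Measurable (negPowIndicator p N) :=
  Measurable.indicator (by fun_prop) measurableSet_Ioo

lemma lintegral_negPowIndicator_rpow {p N : ℝ} (hp : 0 < p) (hN : 1 ≤ N) :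
    ∫⁻ y in Ioi (0:ℝ), negPowIndicator p N y ^ p = ENNReal.ofReal (Real.log N) := by
  have hpow : ∀ y,
      negPowIndicator p N y ^ p = (Ioo 1 N).indicator (fun y => ENNReal.ofReal y⁻¹) y := by
    intro y
    by_cases hy : y ∈ Ioo 1 N
    · have hy0 : 0 < y := one_pos.trans hy.1
      rw [negPowIndicator, indicator_of_mem hy, indicator_of_mem hy,
        ENNReal.ofReal_rpow_of_pos (by positivity), ← Real.rpow_mul hy0.le,
        neg_mul, one_div_mul_cancel hp.ne', Real.rpow_neg_one]
    · rw [negPowIndicator, indicator_of_notMem hy, indicator_of_notMem hy,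
        ENNReal.zero_rpow_of_pos hp]
  simp_rw [hpow]
  rw [lintegral_indicator measurableSet_Ioo, Measure.restrict_restrict measurableSet_Ioo,
    inter_eq_self_of_subset_left (Ioo_subset_Ioi_self.trans (Ioi_subset_Ioi zero_le_one)),
    setLIntegral_Ioo_inv one_pos hN, div_one]

lemma le_TK_negPowIndicator {K : ℝ → ℝ → ℝ≥0∞} (hhom : IsHomogeneousNegOne K)
    (p : ℝ) {a b N x : ℝ} (ha : 0 < a) (hax : 1 ≤ a * x) (hbx : b * x ≤ N) :
    ENNReal.ofReal (x ^ (-(1 / p))) *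
        ∫⁻ t in Ioo a b, K 1 t * ENNReal.ofReal (t ^ (-(1 / p))) ≤
      TK K (negPowIndicator p N) x := by
  have hx : 0 < x := pos_of_mul_pos_right (one_pos.trans_le hax) ha.le
  have hpoint : ∀ t ∈ Ioo a b, ENNReal.ofReal (x ^ (-(1 / p))) *
      (K 1 t * ENNReal.ofReal (t ^ (-(1 / p)))) = K 1 t * negPowIndicator p N (x * t) := by
    intro t ht
    have ht0 : 0 < t := ha.trans ht.1
    have hxt : x * t ∈ Ioo 1 N := by
      constructor <;> nlinarith [ht.1, ht.2]
    rw [negPowIndicator, indicator_of_mem hxt, Real.mul_rpow hx.le ht0.le,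
      ENNReal.ofReal_mul (by positivity)]
    ring
  rw [← lintegral_const_mul' _ _ ENNReal.ofReal_ne_top,
    setLIntegral_congr_fun measurableSet_Ioo hpoint, TK_eq_lintegral_comp_mul hhom _ hx]
  exact lintegral_mono_set fun t ht => ha.trans ht.1

lemma ofReal_log_mul_rpow_le_lintegral_TK_negPowIndicator {K : ℝ → ℝ → ℝ≥0∞}
    (hhom : IsHomogeneousNegOne K) {p : ℝ} (hp : 0 < p) {a b : ℝ} (ha : 0 < a) (hab : a < b) :
    ENNReal.ofReal (Real.log (b / a)) *
        (∫⁻ t in Ioo a b, K 1 t * ENNReal.ofReal (t ^ (-(1 / p)))) ^ p ≤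
      ∫⁻ x in Ioi (0:ℝ), TK K (negPowIndicator p ((b / a) ^ 2)) x ^ p := by
  set r := b / a
  set B := ∫⁻ t in Ioo a b, K 1 t * ENNReal.ofReal (t ^ (-(1 / p)))
  have hr : 1 < r := (one_lt_div ha).2 hab
  have hpoint : ∀ x ∈ Ioo a⁻¹ (r / a), ENNReal.ofReal x⁻¹ * B ^ p ≤
      TK K (negPowIndicator p (r ^ 2)) x ^ p := by
    intro x hx
    have hx0 : 0 < x := (inv_pos.2 ha).trans hx.1
    have hax : 1 ≤ a * x := ((inv_lt_iff_one_lt_mul₀' ha).1 hx.1).le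
    have hbx : b * x ≤ r ^ 2 :=
      calc b * x ≤ b * (r / a) := by gcongr; exacts [(ha.trans hab).le, hx.2.le]
        _ = r ^ 2 := by rw [mul_div_left_comm, sq]
    calc ENNReal.ofReal x⁻¹ * B ^ p = (ENNReal.ofReal (x ^ (-(1 / p))) * B) ^ p := by
          rw [ENNReal.mul_rpow_of_nonneg _ _ hp.le, ENNReal.ofReal_rpow_of_pos (by positivity),
            ← Real.rpow_mul hx0.le, neg_mul, one_div_mul_cancel hp.ne', Real.rpow_neg_one]
      _ ≤ TK K (negPowIndicator p (r ^ 2)) x ^ p :=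
          ENNReal.rpow_le_rpow (le_TK_negPowIndicator hhom p ha hax hbx) hp.le
  calc ENNReal.ofReal (Real.log r) * B ^ p
      = ∫⁻ x in Ioo a⁻¹ (r / a), ENNReal.ofReal x⁻¹ * B ^ p := by
        rw [lintegral_mul_const _ (by fun_prop), setLIntegral_Ioo_inv (inv_pos.2 ha)
          (by rw [← one_div]; gcongr), div_inv_eq_mul, div_mul_cancel₀ r ha.ne', mul_comm]
    _ ≤ ∫⁻ x in Ioo a⁻¹ (r / a), TK K (negPowIndicator p (r ^ 2)) x ^ p :=
        setLIntegral_mono' measurableSet_Ioo hpoint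
    _ ≤ ∫⁻ x in Ioi (0:ℝ), TK K (negPowIndicator p (r ^ 2)) x ^ p :=
        lintegral_mono_set fun x hx => (inv_pos.2 ha).trans hx.1

lemma rpow_setLIntegral_Ioo_le_of_bound {K : ℝ → ℝ → ℝ≥0∞}
    (hhom : IsHomogeneousNegOne K) {p : ℝ} (hp : 0 < p) {C : ℝ≥0∞}
    (hbound : ∀ f : ℝ → ℝ≥0∞, Measurable f →
      ∫⁻ x in Ioi (0:ℝ), TK K f x ^ p ≤ C * ∫⁻ y in Ioi (0:ℝ), f y ^ p)
    {a b : ℝ} (ha : 0 < a) (hab : a < b) :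
    (∫⁻ t in Ioo a b, K 1 t * ENNReal.ofReal (t ^ (-(1 / p)))) ^ p ≤ 2 * C := by
  have hlog : 0 < Real.log (b / a) := Real.log_pos ((one_lt_div ha).2 hab)
  have key : ENNReal.ofReal (Real.log (b / a)) *
      (∫⁻ t in Ioo a b, K 1 t * ENNReal.ofReal (t ^ (-(1 / p)))) ^ p ≤
      ENNReal.ofReal (Real.log (b / a)) * (2 * C) :=
    calc _ ≤ ∫⁻ x in Ioi (0:ℝ), TK K (negPowIndicator p ((b / a) ^ 2)) x ^ p :=
          ofReal_log_mul_rpow_le_lintegral_TK_negPowIndicator hhom hp ha hab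
      _ ≤ C * ∫⁻ y in Ioi (0:ℝ), negPowIndicator p ((b / a) ^ 2) y ^ p :=
          hbound _ (measurable_negPowIndicator _ _)
      _ = ENNReal.ofReal (Real.log (b / a)) * (2 * C) := by
          rw [lintegral_negPowIndicator_rpow hp (one_le_pow₀ ((one_le_div ha).2 hab.le)),
            Real.log_pow, ENNReal.ofReal_mul (by norm_num)]
          norm_num
          ring
  exact (ENNReal.mul_le_mul_iff_right (ENNReal.ofReal_pos.2 hlog).ne'
    ENNReal.ofReal_ne_top).1 key

lemma lintegral_K_one_mul_rpow_lt_top_of_bound {K : ℝ → ℝ → ℝ≥0∞}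
    (hhom : IsHomogeneousNegOne K) {p : ℝ} (hp : 0 < p) {C : ℝ≥0∞} (hC : C ≠ ⊤)
    (hbound : ∀ f : ℝ → ℝ≥0∞, Measurable f →
      ∫⁻ x in Ioi (0:ℝ), TK K f x ^ p ≤ C * ∫⁻ y in Ioi (0:ℝ), f y ^ p) :
    ∫⁻ t in Ioi (0:ℝ), K 1 t * ENNReal.ofReal (t ^ (-(1 / p))) < ⊤ := by
  set s : ℕ → Set ℝ := fun n => Ioo ((n + 2 : ℝ)⁻¹) (n + 2)
  have hs : ⋃ n, s n = Ioi 0 := by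
    refine Subset.antisymm (iUnion_subset fun n x hx => (by positivity : (0:ℝ) < _).trans hx.1)
      fun x (hx : 0 < x) => ?_
    obtain ⟨n, hn⟩ := exists_nat_gt (max x x⁻¹)
    refine mem_iUnion.2 ⟨n, ?_, by linarith [le_max_left x x⁻¹]⟩
    rw [inv_lt_comm₀ (by positivity) hx]
    linarith [le_max_right x x⁻¹]
  have hmono : Monotone s := fun m n hmn => by
    have : (m + 2 : ℝ) ≤ n + 2 := by gcongr
    exact Ioo_subset_Ioo (inv_anti₀ (by positivity) this) this
  rw [← hs, setLIntegral_iUnion_of_directed _ hmono.directed_le]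
  refine lt_of_le_of_lt (iSup_le fun n => ?_) (ENNReal.rpow_lt_top_of_nonneg (by positivity)
    (ENNReal.mul_ne_top ENNReal.ofNat_ne_top hC) : (2 * C) ^ (1 / p) < ⊤)
  rw [← ENNReal.rpow_le_rpow_iff hp, ← ENNReal.rpow_mul, one_div_mul_cancel hp.ne',
    ENNReal.rpow_one]
  have h1 : (1:ℝ) < n + 2 := by linarith [n.cast_nonneg (α := ℝ)]
  exact rpow_setLIntegral_Ioo_le_of_bound hhom hp hbound (by positivity)
    ((inv_lt_one_of_one_lt₀ h1).trans h1)

theorem statement18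
    (K : ℝ → ℝ → ℝ≥0∞) (hK : Measurable (Function.uncurry K))
    (hhom : ∀ l > 0, ∀ x > 0, ∀ y > 0, K (l * x) (l * y) = K x y / ENNReal.ofReal l)
    (p : ℝ) (hp : 1 < p) :
    (∃ C > 0, ∀ f : ℝ → ℝ≥0∞, Measurable f →
      (∫⁻ x in Ioi (0:ℝ), TK K f x ^ p) ^ (1 / p) ≤
        ENNReal.ofReal C * (∫⁻ y in Ioi (0:ℝ), f y ^ p) ^ (1 / p)) ↔
    (∫⁻ y in Ioi (0:ℝ), K 1 y * ENNReal.ofReal (y ^ (-(1 / p)))) < ⊤ := by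
  have hp0 : 0 < p := one_pos.trans hp
  constructor
  · rintro ⟨C, -, hC⟩
    exact lintegral_K_one_mul_rpow_lt_top_of_bound hhom hp0
      (ENNReal.rpow_ne_top_of_nonneg hp0.le ENNReal.ofReal_ne_top)
      fun f hf => (ENNReal.rpow_one_div_le_mul_rpow_one_div_iff hp0).1 (hC f hf)
  · intro hA
    set A := ∫⁻ y in Ioi (0:ℝ), K 1 y * ENNReal.ofReal (y ^ (-(1 / p)))
    refine ⟨A.toReal + 1, by positivity, fun f hf =>
      (ENNReal.rpow_one_div_le_mul_rpow_one_div_iff hp0).2 ?_⟩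
    have hAC : A ≤ ENNReal.ofReal (A.toReal + 1) :=
      (ENNReal.ofReal_toReal hA.ne).symm.trans_le (ENNReal.ofReal_le_ofReal (by linarith))
    calc ∫⁻ x in Ioi (0:ℝ), TK K f x ^ p ≤ A ^ p * ∫⁻ y in Ioi (0:ℝ), f y ^ p :=
          lintegral_TK_rpow_le hK hhom hp.le hf
      _ ≤ ENNReal.ofReal (A.toReal + 1) ^ p * ∫⁻ y in Ioi (0:ℝ), f y ^ p := by gcongr

end
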